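/- arXiv:2206.03983 — 5 statements merged into one kernel-verified Lean document; each statement's English description precedes it below -/
import Mathlib

section
/- Let k ≥ 1 and let G be a k-regular simple graph on n vertices with n < 2k + 2. Then G is k-edge-connected; that is, for every nonempty proper subset A of the vertex set, the number of edges between A and its complement is at least k. -/
/-!
A vertex of a set `A` has at most `#A - 1` neighbours inside `A`, so in a `k`-regular graph
each vertex of `A` sends at least `k + 1 - #A` edges out of `A`, and
`#A * (k + 1 - #A) ≥ k` whenever `1 ≤ #A ≤ k`. Since the boundary of `A` is that of `Aᶜ`,
and `#V ≤ 2k + 1` forces `#A ≤ k` or `#Aᶜ ≤ k`, this bound applies to every nonempty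
proper `A`.
-/

/-- The number of edges between `A` and its complement: each crossing edge is counted
by its unique ordered pair whose first coordinate lies in `A`. -/
def edgeBoundary {V : Type*} [Fintype V] [DecidableEq V] (G : SimpleGraph V)
    [DecidableRel G.Adj] (A : Finset V) : ℕ :=
  ((A ×ˢ Aᶜ).filter fun p => G.Adj p.1 p.2).card

open Finset

namespace SimpleGraph

variable {V : Type*} [Fintype V] [DecidableEq V] (G : SimpleGraph V) [DecidableRel G.Adj]

theorem edgeBoundary_eq_sum (A : Finset V) :
    edgeBoundary G A = ∑ a ∈ A, #{b ∈ Aᶜ | G.Adj a b} := by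
  simp only [edgeBoundary, card_filter, sum_product]

theorem edgeBoundary_compl (A : Finset V) : edgeBoundary G Aᶜ = edgeBoundary G A := by
  refine card_bij (fun p _ => p.swap) ?_ (fun p _ q _ h => Prod.swap_injective h) ?_
  · rintro ⟨a, b⟩ hp
    simp only [mem_filter, mem_product, compl_compl] at hp ⊢
    exact ⟨⟨hp.1.2, hp.1.1⟩, hp.2.symm⟩
  · rintro ⟨a, b⟩ hp
    simp only [mem_filter, mem_product] at hp
    exact ⟨(b, a), by simpa [hp.1.2] using And.intro hp.1.1 hp.2.symm, rfl⟩

theorem degree_add_one_le_card_add {A : Finset V} {a : V} (ha : a ∈ A) :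
    G.degree a + 1 ≤ #A + #{b ∈ Aᶜ | G.Adj a b} := by
  have hsub : G.neighborFinset a ⊆ A.erase a ∪ {b ∈ Aᶜ | G.Adj a b} := by
    intro b hb
    rw [mem_neighborFinset] at hb
    by_cases hbA : b ∈ A
    · exact mem_union_left _ (mem_erase.2 ⟨hb.ne', hbA⟩)
    · exact mem_union_right _ (mem_filter.2 ⟨mem_compl.2 hbA, hb⟩)
  have := (card_le_card hsub).trans (card_union_le _ _)
  rw [card_neighborFinset_eq_degree, card_erase_of_mem ha] at this
  have := card_pos.2 ⟨a, ha⟩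
  omega

variable {G}

theorem IsRegularOfDegree.le_edgeBoundary {k : ℕ} (hreg : G.IsRegularOfDegree k)
    {A : Finset V} (hA : A.Nonempty) (hAk : #A ≤ k) : k ≤ edgeBoundary G A := by
  have hsum : #A * (k + 1) ≤ #A * #A + edgeBoundary G A := by
    calc #A * (k + 1) = ∑ a ∈ A, (G.degree a + 1) := by
          rw [sum_congr rfl fun a _ => by rw [hreg a], sum_const, smul_eq_mul]
      _ ≤ ∑ a ∈ A, (#A + #{b ∈ Aᶜ | G.Adj a b}) :=
          sum_le_sum fun a ha => G.degree_add_one_le_card_add ha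
      _ = #A * #A + edgeBoundary G A := by
          rw [sum_add_distrib, sum_const, smul_eq_mul, edgeBoundary_eq_sum]
  have h1 : 1 ≤ #A := card_pos.2 hA
  nlinarith

end SimpleGraph

theorem stmt_0_general {V : Type*} [Fintype V] [DecidableEq V] (G : SimpleGraph V)
    [DecidableRel G.Adj] (k : ℕ) (hreg : G.IsRegularOfDegree k)
    (hn : Fintype.card V < 2 * k + 2) :
    ∀ A : Finset V, A.Nonempty → A ≠ Finset.univ → k ≤ edgeBoundary G A := by
  intro A hA hAuniv
  by_cases hAk : #A ≤ k
  · exact hreg.le_edgeBoundary hA hAk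
  · have hAc : Aᶜ.Nonempty := nonempty_iff_ne_empty.2 (by simpa using hAuniv)
    have hAck : #Aᶜ ≤ k := by rw [card_compl]; omega
    rw [← SimpleGraph.edgeBoundary_compl]
    exact hreg.le_edgeBoundary hAc hAck

theorem stmt_0 {V : Type*} [Fintype V] [DecidableEq V] (G : SimpleGraph V)
    [DecidableRel G.Adj] (k : ℕ) (hk : 1 ≤ k) (hreg : G.IsRegularOfDegree k)
    (hn : Fintype.card V < 2 * k + 2) :
    ∀ A : Finset V, A.Nonempty → A ≠ Finset.univ → k ≤ edgeBoundary G A :=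
  stmt_0_general G k hreg hn
end

section
/- Let k ≥ 3 and let G be a connected k-regular simple graph in which every vertex lies in a (unique) clique of size k, with cliques C_1, ..., C_n. Let H be the k-regular multigraph obtained by contracting each clique C_i to a single vertex (keeping all edges between distinct cliques). Then the algebraic connectivity satisfies μ₂(G) ≤ μ₂(H)/k. -/
open Finset Matrix

/-- The algebraic connectivity `μ₂` of a Laplacian matrix `L`, via the variational
(Courant–Fischer) characterization: the infimum of Rayleigh quotients over nonzero
vectors orthogonal to the all-ones vector. -/
noncomputable def mu2 {n : Type*} [Fintype n] (L : Matrix n n ℝ) : ℝ :=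
  sInf { r : ℝ | ∃ x : n → ℝ, x ≠ 0 ∧ (∑ v, x v) = 0 ∧
    r = (x ⬝ᵥ L.mulVec x) / (x ⬝ᵥ x) }

/-- The Laplacian matrix of the multigraph (with no loops) on `V` whose edge
multiset is `E`; multiplicities are counted. -/
noncomputable def multiLap {V : Type*} [Fintype V] [DecidableEq V]
    (E : Multiset (Sym2 V)) : Matrix V V ℝ :=
  fun u v => if u = v then (∑ w, (E.count s(u, w) : ℝ)) else -(E.count s(u, v) : ℝ)

/-! Pulling a test vector `y` on the cliques back to `y ∘ f` on `V` keeps it orthogonal to the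
constants, multiplies `‖y‖²` by the clique size `k`, and preserves the Laplacian quadratic form:
an edge inside a clique contributes `0`, and the remaining edges of `G` are exactly those of `H`.
Hence every Rayleigh quotient of `H`, divided by `k`, is a Rayleigh quotient of `G`. -/

section MultiLap

variable {V ι : Type*}

def edgeSqDiff (x : V → ℝ) : Sym2 V → ℝ :=
  Sym2.lift ⟨fun a b => (x a - x b) ^ 2, fun a b => by ring⟩

@[simp]
lemma edgeSqDiff_mk (x : V → ℝ) (a b : V) : edgeSqDiff x s(a, b) = (x a - x b) ^ 2 := rfl

lemma edgeSqDiff_map (f : V → ι) (y : ι → ℝ) (e : Sym2 V) :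
    edgeSqDiff y (e.map f) = edgeSqDiff (y ∘ f) e := by
  induction e using Sym2.inductionOn with
  | hf a b => rfl

lemma edgeSqDiff_of_isDiag (x : V → ℝ) {e : Sym2 V} (he : e.IsDiag) : edgeSqDiff x e = 0 := by
  induction e using Sym2.inductionOn with
  | hf a b => simp [Sym2.mk_isDiag_iff.1 he]

variable [Fintype V] [DecidableEq V] [Fintype ι] [DecidableEq ι]

lemma multiLap_zero : multiLap (0 : Multiset (Sym2 V)) = 0 := by
  ext u v
  simp [multiLap]

lemma multiLap_add (E F : Multiset (Sym2 V)) :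
    multiLap (E + F) = multiLap E + multiLap F := by
  ext u v
  simp only [multiLap, Multiset.count_add, Matrix.add_apply]
  split_ifs <;> push_cast [sum_add_distrib] <;> ring

lemma multiLap_singleton {a b : V} (hab : a ≠ b) :
    multiLap {s(a, b)} =
      vecMulVec (Pi.single a 1 - Pi.single b 1) (Pi.single a 1 - Pi.single b 1) := by
  ext u v
  simp only [multiLap, Multiset.count_singleton, Sym2.eq_iff, vecMulVec_apply, Pi.sub_apply,
    Pi.single_apply]
  split_ifs <;> simp_all [Ne.symm hab]

lemma dotProduct_multiLap_singleton_mulVec {a b : V} (hab : a ≠ b) (x : V → ℝ) :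
    x ⬝ᵥ multiLap {s(a, b)} *ᵥ x = (x a - x b) ^ 2 := by
  rw [multiLap_singleton hab, vecMulVec_mulVec, op_smul_eq_smul, dotProduct_smul, smul_eq_mul,
    dotProduct_comm _ x, dotProduct_sub, dotProduct_single, dotProduct_single]
  ring

lemma dotProduct_multiLap_mulVec (x : V → ℝ) {E : Multiset (Sym2 V)}
    (hE : ∀ e ∈ E, ¬ e.IsDiag) : x ⬝ᵥ multiLap E *ᵥ x = (E.map (edgeSqDiff x)).sum := by
  induction E using Multiset.induction_on with
  | empty => simp [multiLap_zero]
  | cons e E ih =>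
    induction e using Sym2.inductionOn with
    | hf a b =>
      have hab : a ≠ b := fun h => hE _ (Multiset.mem_cons_self _ _) (Sym2.mk_isDiag_iff.2 h)
      rw [← Multiset.singleton_add, multiLap_add, add_mulVec, dotProduct_add,
        dotProduct_multiLap_singleton_mulVec hab,
        ih fun e he => hE e (Multiset.mem_cons_of_mem he)]
      simp

lemma dotProduct_multiLap_contract_mulVec (f : V → ι) {E : Multiset (Sym2 V)}
    (hE : ∀ e ∈ E, ¬ e.IsDiag) (y : ι → ℝ) :
    y ⬝ᵥ multiLap ((E.map (Sym2.map f)).filter fun e => ¬ e.IsDiag) *ᵥ y =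
      (y ∘ f) ⬝ᵥ multiLap E *ᵥ (y ∘ f) := by
  rw [dotProduct_multiLap_mulVec _ fun e he => (Multiset.mem_filter.1 he).2,
    dotProduct_multiLap_mulVec _ hE]
  have hloops : ((((E.map (Sym2.map f)).filter fun e => e.IsDiag)).map (edgeSqDiff y)).sum = 0 :=
    Multiset.sum_eq_zero fun r hr => by
      obtain ⟨e, he, rfl⟩ := Multiset.mem_map.1 hr
      exact edgeSqDiff_of_isDiag y (Multiset.mem_filter.1 he).2
  rw [← zero_add (Multiset.sum _), ← hloops, ← Multiset.sum_add, ← Multiset.map_add,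
    Multiset.filter_add_not, Multiset.map_map]
  exact congrArg Multiset.sum (Multiset.map_congr rfl fun e _ => edgeSqDiff_map f y e)

open SimpleGraph in
lemma SimpleGraph.lapMatrix_eq_multiLap (G : SimpleGraph V) [DecidableRel G.Adj] :
    G.lapMatrix ℝ = multiLap G.edgeFinset.val := by
  have hcount : ∀ u w : V, (G.edgeFinset.val.count s(u, w) : ℝ) = if G.Adj u w then 1 else 0 := by
    intro u w
    rw [Multiset.count_eq_of_nodup G.edgeFinset.nodup]
    simp
  ext u v
  by_cases huv : u = v
  · subst huv
    simp [multiLap, hcount, lapMatrix, degMatrix, degree, neighborFinset_eq_filter]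
  · simp [multiLap, hcount, lapMatrix, degMatrix, huv]

end MultiLap

section Rayleigh

variable {n m : Type*} [Fintype n] [Fintype m]

lemma mu2_le {L : Matrix n n ℝ} (hL : ∀ x, 0 ≤ x ⬝ᵥ L *ᵥ x) {x : n → ℝ} (hx : x ≠ 0)
    (hsum : ∑ v, x v = 0) : mu2 L ≤ x ⬝ᵥ L *ᵥ x / (x ⬝ᵥ x) := by
  refine csInf_le ⟨0, ?_⟩ ⟨x, hx, hsum, rfl⟩
  rintro _ ⟨x, -, -, rfl⟩
  exact div_nonneg (hL x) (dotProduct_self_star_nonneg x)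

lemma le_mu2 [Nontrivial n] {L : Matrix n n ℝ} {c : ℝ}
    (h : ∀ x : n → ℝ, x ≠ 0 → ∑ v, x v = 0 → c ≤ x ⬝ᵥ L *ᵥ x / (x ⬝ᵥ x)) : c ≤ mu2 L := by
  classical
  obtain ⟨i, j, hij⟩ := exists_pair_ne n
  refine le_csInf ⟨_, Pi.single i 1 - Pi.single j 1, ?_, ?_, rfl⟩ ?_
  · intro h0
    simpa [hij] using congrFun h0 i
  · simp [sum_sub_distrib]
  · rintro _ ⟨x, hx, hsum, rfl⟩
    exact h x hx hsum

lemma sum_comp_eq_mul_of_card_fiber {R : Type*} [NonAssocSemiring R] [DecidableEq m]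
    {f : n → m} {k : ℕ} (hfib : ∀ i, #{v | f v = i} = k) (g : m → R) : ∑ v, g (f v) = k * ∑ i, g i := by
  rw [← sum_fiberwise univ f, mul_sum]
  refine sum_congr rfl fun i _ => ?_
  rw [sum_congr rfl fun v hv => congrArg g (mem_filter.1 hv).2, sum_const, hfib, nsmul_eq_mul]

lemma mu2_mul_le_mu2_of_pullback [DecidableEq m] [Nontrivial m] {L : Matrix n n ℝ}
    {M : Matrix m m ℝ} (hL : ∀ x, 0 ≤ x ⬝ᵥ L *ᵥ x) (f : n → m) {k : ℕ} (hk : 0 < k)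
    (hfib : ∀ i, #{v | f v = i} = k)
    (hLM : ∀ y : m → ℝ, (y ∘ f) ⬝ᵥ L *ᵥ (y ∘ f) = y ⬝ᵥ M *ᵥ y) : mu2 L * k ≤ mu2 M := by
  have hk' : (0 : ℝ) < k := Nat.cast_pos.2 hk
  refine le_mu2 fun y hy hsum => ?_
  have hsurj : Function.Surjective f := fun i => by
    obtain ⟨v, hv⟩ := card_pos.1 (hk.trans_eq (hfib i).symm)
    exact ⟨v, (mem_filter.1 hv).2⟩
  have hyf : y ∘ f ≠ 0 := fun h => hy (funext fun i => by
    obtain ⟨v, rfl⟩ := hsurj i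
    exact congrFun h v)
  have hyf_sum : ∑ v, (y ∘ f) v = 0 := by
    rw [Function.comp_def, sum_comp_eq_mul_of_card_fiber hfib y, hsum, mul_zero]
  have hyf_sq : (y ∘ f) ⬝ᵥ (y ∘ f) = k * (y ⬝ᵥ y) :=
    sum_comp_eq_mul_of_card_fiber hfib fun i => y i * y i
  calc mu2 L * k ≤ (y ∘ f) ⬝ᵥ L *ᵥ (y ∘ f) / ((y ∘ f) ⬝ᵥ (y ∘ f)) * k := by
        gcongr; exact mu2_le hL hyf hyf_sum
    _ = y ⬝ᵥ M *ᵥ y / (y ⬝ᵥ y) := by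
        rw [hLM, hyf_sq, mul_comm (k : ℝ), ← div_div, div_mul_cancel₀ _ hk'.ne']

end Rayleigh

lemma SimpleGraph.exists_adj_ne_of_card_fiber_le {V ι : Type*} [Fintype V] [DecidableEq V]
    [DecidableEq ι] {G : SimpleGraph V} [DecidableRel G.Adj] (f : V → ι) (v : V)
    (hv : #{w | f w = f v} ≤ G.degree v) : ∃ w, G.Adj v w ∧ f w ≠ f v := by
  by_contra! h
  have hsub : G.neighborFinset v ⊆ ({w | f w = f v} : Finset V).erase v := fun w hw => by
    rw [mem_neighborFinset] at hw
    exact mem_erase.2 ⟨hw.ne', mem_filter.2 ⟨mem_univ w, h w hw⟩⟩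
  have := card_le_card hsub
  rw [card_neighborFinset_eq_degree, card_erase_of_mem (by simp)] at this
  have : 0 < #({w | f w = f v} : Finset V) := card_pos.2 ⟨v, by simp⟩
  omega

theorem stmt_3_general {V ι : Type*} [Fintype V] [DecidableEq V] [Fintype ι] [DecidableEq ι]
    (k : ℕ) (hk : 3 ≤ k) (G : SimpleGraph V) [DecidableRel G.Adj]
    (hconn : G.Connected) (hreg : G.IsRegularOfDegree k)
    (f : V → ι)
    (hclique : ∀ i : ι, G.IsNClique k (Finset.univ.filter fun v => f v = i))
    (H : Multiset (Sym2 ι))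
    (hH : H = (G.edgeFinset.val.map (Sym2.map f)).filter fun e => ¬ e.IsDiag) :
    mu2 (G.lapMatrix ℝ) ≤ mu2 (multiLap H) / k := by
  have hfib : ∀ i, #{v | f v = i} = k := fun i => (hclique i).card_eq
  obtain ⟨v⟩ := hconn.nonempty
  obtain ⟨w, -, hw⟩ := G.exists_adj_ne_of_card_fiber_le f v (by rw [hfib, hreg v])
  -- without a second clique, `mu2 (multiLap H)` would be the junk value `sInf ∅ = 0`
  have : Nontrivial ι := ⟨f w, f v, hw⟩
  have hk0 : 0 < k := by omega
  rw [le_div_iff₀ (Nat.cast_pos.2 hk0)]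
  refine mu2_mul_le_mu2_of_pullback (fun x => ?_) f hk0 hfib fun y => ?_
  · simpa using (G.posSemidef_lapMatrix ℝ).dotProduct_mulVec_nonneg x
  · rw [hH, dotProduct_multiLap_contract_mulVec f fun e he =>
      G.not_isDiag_of_mem_edgeSet (SimpleGraph.mem_edgeFinset.1 he), G.lapMatrix_eq_multiLap]

/-- Contracting the (pairwise disjoint) `k`-cliques of a connected `k`-regular graph
`G` — given by the fibers of `f : V → ι` — to single vertices yields a multigraph `H`
with `μ₂(G) ≤ μ₂(H)/k`. -/
theorem stmt_3 {V ι : Type*} [Fintype V] [DecidableEq V] [Fintype ι] [DecidableEq ι]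
    (k : ℕ) (hk : 3 ≤ k) (G : SimpleGraph V) [DecidableRel G.Adj]
    (hconn : G.Connected) (hreg : G.IsRegularOfDegree k)
    (f : V → ι) (hsurj : Function.Surjective f)
    (hclique : ∀ i : ι, G.IsNClique k (Finset.univ.filter fun v => f v = i))
    (H : Multiset (Sym2 ι))
    (hH : H = (G.edgeFinset.val.map (Sym2.map f)).filter fun e => ¬ e.IsDiag) :
    mu2 (G.lapMatrix ℝ) ≤ mu2 (multiLap H) / k :=
  stmt_3_general k hk G hconn hreg f hclique H hH
end

section
/- A connected (multi)graph G satisfies: G - e contains k edge-disjoint spanning trees for every edge e of G, if and only if η(G) > k. -/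
/-!
Both sides say that every edge set `X` splitting `E` into `c ≥ 2` components has
`|X| > k (c - 1)`: for the strength this is because the infimum runs over finitely many `X`.
If each `E - e` carries `k` spanning trees, pick `e ∈ X` joining two components of `E - X`;
each tree of `E - e` has at least `c - 1` edges between these components, all in `X - e`.

Conversely, `E - e` then satisfies the Nash-Williams–Tutte condition, and we prove that theorem
by an exchange argument. Take `k` edge-disjoint forests `F i` in `E` with the fewest components
in total, and call an edge exchangeable if it is unused after some sequence of steps that put
an unused edge into some `F i` and remove another edge without changing its component count.
The ends of an exchangeable edge are joined by exchangeable edges in every `F i`, so each `F i`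
restricted to exchangeable edges has the components of all exchangeable edges of `E`. The cut
condition for the non-exchangeable edges then bounds the total number of components by `k`,
so every `F i` is a spanning tree.
-/

/-- Number of connected components of the multigraph on vertex set `V` with edge
multiset `E` (isolated vertices count as components). -/
noncomputable def numComponents {V : Type*} [Fintype V] [DecidableEq V]
    (E : Multiset (Sym2 V)) : ℕ :=
  Nat.card (Quot (fun a b : V => s(a, b) ∈ E))

/-- The strength (fractional spanning tree packing number) of the multigraph with
edge multiset `E`. -/
noncomputable def strength {V : Type*} [Fintype V] [DecidableEq V]
    (E : Multiset (Sym2 V)) : ℝ :=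
  sInf { r : ℝ | ∃ X ≤ E, 1 < numComponents (E - X) ∧
    r = (Multiset.card X : ℝ) / ((numComponents (E - X) : ℝ) - 1) }

/-- A sub-multiset of edges is a spanning tree if it connects all of `V` and has
`|V| - 1` edges. -/
def IsSpanningTree {V : Type*} [Fintype V] [DecidableEq V]
    (T : Multiset (Sym2 V)) : Prop :=
  numComponents T = 1 ∧ Multiset.card T = Fintype.card V - 1

/-- The multigraph with edge multiset `E` contains `k` edge-disjoint spanning trees. -/
def HasEdgeDisjointSpanningTrees {V : Type*} [Fintype V] [DecidableEq V]
    (E : Multiset (Sym2 V)) (k : ℕ) : Prop :=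
  ∃ Ts : Fin k → Multiset (Sym2 V), (∑ i, Ts i) ≤ E ∧ ∀ i, IsSpanningTree (Ts i)

open Multiset Function Relation

theorem Multiset.mem_sub_iff_cons_le {α : Type*} [DecidableEq α] {S E : Multiset α} {g : α}
    (hS : S ≤ E) : g ∈ E - S ↔ g ::ₘ S ≤ E := by
  rw [← singleton_le, le_tsub_iff_left hS, add_comm, singleton_add]

theorem Finset.exists_sum_update {ι M : Type*} [Fintype ι] [DecidableEq ι] [AddCommMonoid M]
    (F : ι → M) (i : ι) : ∃ R, ∑ j, F j = F i + R ∧ ∀ m, ∑ j, update F i m j = m + R :=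
  ⟨∑ j ∈ univ \ {i}, F j,
    by rw [sdiff_singleton_eq_erase, add_sum_erase _ _ (mem_univ i)],
    fun m => sum_update_of_mem (mem_univ i) F m⟩

theorem Multiset.sum_update_le_cons {α ι : Type*} [Fintype ι] [DecidableEq ι]
    (F : ι → Multiset α) (j : ι) {g : α} {M : Multiset α} (hM : M ≤ g ::ₘ F j) :
    ∑ i, update F j M i ≤ g ::ₘ ∑ i, F i := by
  obtain ⟨R, hsum, hupd⟩ := Finset.exists_sum_update F j
  rw [hupd, hsum, ← cons_add]
  exact add_le_add_left hM R

namespace EdgeMultiset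

section Reachability

variable {V : Type*}

abbrev Adj (E : Multiset (Sym2 V)) (a b : V) : Prop := s(a, b) ∈ E

def Reachable (E : Multiset (Sym2 V)) (a b : V) : Prop :=
  Quot.mk (Adj E) a = Quot.mk (Adj E) b

variable {A B E : Multiset (Sym2 V)} {a b c x y : V}

theorem Reachable.symm (h : Reachable E a b) : Reachable E b a := Eq.symm h

theorem Reachable.trans (h : Reachable E a b) (h' : Reachable E b c) : Reachable E a c :=
  Eq.trans h h'

theorem reachable_of_mem (h : s(a, b) ∈ E) : Reachable E a b := Quot.sound h

theorem Reachable.mono (hAB : A ≤ B) (h : Reachable A x y) : Reachable B x y :=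
  congrArg (Quot.lift (Quot.mk (Adj B)) fun _ _ hab => Quot.sound (mem_of_le hAB hab)) h

def internalEdges (B : Multiset (Sym2 V)) : Set (Sym2 V) :=
  Sym2.fromRel (r := Reachable B) ⟨fun _ _ => Reachable.symm⟩

theorem mem_internalEdges_of_mem {e : Sym2 V} (he : e ∈ B) : e ∈ internalEdges B := by
  induction e using Sym2.ind with
  | _ a b => exact reachable_of_mem he

theorem card_quot_le_card_quot [Finite V] {r s : V → V → Prop}
    (h : ∀ a b, r a b → Quot.mk s a = Quot.mk s b) : Nat.card (Quot s) ≤ Nat.card (Quot r) :=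
  Nat.card_le_card_of_surjective (Quot.lift (Quot.mk s) h)
    (Quot.ind fun v => ⟨Quot.mk r v, rfl⟩)

theorem exists_minimal_reachable [DecidableEq V] (h : Reachable A x y) :
    ∃ B ≤ A, Reachable B x y ∧ ∀ f ∈ B, ¬ Reachable (B.erase f) x y := by
  obtain ⟨B, ⟨hBA, hB⟩, hmin⟩ :=
    wellFounded_lt.has_min {B | B ≤ A ∧ Reachable B x y} ⟨A, le_rfl, h⟩
  exact ⟨B, hBA, hB, fun f hf hf' => hmin _ ⟨(erase_le f B).trans hBA, hf'⟩ (erase_lt.2 hf)⟩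

section Cons

open scoped Classical

variable (A) (a b)

noncomputable def mergeClass (z : Quot (Adj A)) : Quot (Adj A) :=
  if z = Quot.mk _ b then Quot.mk _ a else z

noncomputable def consProj : Quot (Adj (s(a, b) ::ₘ A)) → Quot (Adj A) :=
  Quot.lift (fun v => mergeClass A a b (Quot.mk _ v)) fun u v huv => by
    rcases mem_cons.1 huv with h | h
    · rcases Sym2.eq_iff.1 h with ⟨rfl, rfl⟩ | ⟨rfl, rfl⟩ <;>
        · unfold mergeClass
          split_ifs <;> simp_all
    · rw [show Quot.mk (Adj A) u = Quot.mk _ v from Quot.sound h]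

theorem consProj_injective : Injective (consProj A a b) := by
  let incl : Quot (Adj A) → Quot (Adj (s(a, b) ::ₘ A)) :=
    Quot.lift (Quot.mk _) fun _ _ h => Quot.sound (mem_cons_of_mem h)
  have hincl : ∀ z, incl (consProj A a b z) = z := by
    refine Quot.ind fun v => ?_
    change incl (mergeClass A a b (Quot.mk _ v)) = Quot.mk _ v
    unfold mergeClass
    split_ifs with hv
    · exact (Quot.sound (mem_cons_self _ _)).trans ((Reachable.mono (le_cons_self _ _) hv.symm))
    · rfl
  exact LeftInverse.injective hincl

variable {A a b}

theorem reachable_cons_iff :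
    Reachable (s(a, b) ::ₘ A) x y ↔
      Reachable A x y ∨ (Reachable A x a ∧ Reachable A b y) ∨
        (Reachable A x b ∧ Reachable A a y) := by
  rw [Reachable, ← (consProj_injective A a b).eq_iff]
  change mergeClass A a b _ = mergeClass A a b _ ↔ _
  unfold mergeClass Reachable
  split_ifs with hx hy hy <;> grind

end Cons

end Reachability

section Counting

variable {V : Type*} [Fintype V] [DecidableEq V] {A B E T : Multiset (Sym2 V)} {a b : V}

theorem numComponents_le_of_forall_mem (h : ∀ a b, s(a, b) ∈ B → Reachable A a b) :
    numComponents A ≤ numComponents B :=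
  card_quot_le_card_quot h

theorem numComponents_anti (hAB : A ≤ B) : numComponents B ≤ numComponents A :=
  numComponents_le_of_forall_mem fun _ _ h => reachable_of_mem (mem_of_le hAB h)

theorem numComponents_cons (A : Multiset (Sym2 V)) (a b : V) :
    numComponents (s(a, b) ::ₘ A) = Nat.card (Set.range (mergeClass A a b)) := by
  change Nat.card (Quot (Adj (s(a, b) ::ₘ A))) = _
  rw [← Nat.card_range_of_injective (consProj_injective A a b)]
  congr 2
  exact (Set.range_quot_lift _).trans (Quot.mk_surjective.range_comp (mergeClass A a b))

theorem numComponents_cons_of_reachable (h : Reachable A a b) :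
    numComponents (s(a, b) ::ₘ A) = numComponents A := by
  classical
  have : mergeClass A a b = id := funext fun z => by
    unfold mergeClass
    split_ifs with hz
    · rw [hz]; exact h
    · rfl
  rw [numComponents_cons, this, Set.range_id, Nat.card_univ]
  rfl

theorem numComponents_cons_add_one (h : ¬ Reachable A a b) :
    numComponents (s(a, b) ::ₘ A) + 1 = numComponents A := by
  classical
  have : Nonempty (Quot (Adj A)) := ⟨Quot.mk _ b⟩
  have hrange : Set.range (mergeClass A a b) = {Quot.mk _ b}ᶜ := by
    ext z
    simp only [Set.mem_range, Set.mem_compl_singleton_iff, mergeClass]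
    constructor
    · rintro ⟨w, rfl⟩
      split_ifs with hw
      exacts [h, hw]
    · exact fun hz => ⟨z, if_neg hz⟩
  rw [numComponents_cons, hrange, Nat.card_coe_set_eq, Set.ncard_compl, Set.ncard_singleton]
  exact Nat.sub_add_cancel Nat.card_pos

theorem numComponents_le_numComponents_cons_add_one (e : Sym2 V) (A : Multiset (Sym2 V)) :
    numComponents A ≤ numComponents (e ::ₘ A) + 1 := by
  induction e using Sym2.ind with
  | _ a b =>
    by_cases h : Reachable A a b
    · rw [numComponents_cons_of_reachable h]; omega
    · rw [numComponents_cons_add_one h]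

theorem numComponents_le_numComponents_add_add_card (A X : Multiset (Sym2 V)) :
    numComponents A ≤ numComponents (X + A) + card X := by
  induction X using Multiset.induction with
  | empty => simp
  | cons e X ih =>
    have := numComponents_le_numComponents_cons_add_one e (X + A)
    rw [cons_add, card_cons]
    omega

theorem numComponents_sub_le (A X : Multiset (Sym2 V)) :
    numComponents (A - X) ≤ numComponents A + card X :=
  (numComponents_le_numComponents_add_add_card (A - X) X).trans <|
    Nat.add_le_add_right (numComponents_anti (by rw [add_comm]; exact le_tsub_add)) _

theorem numComponents_filter_le (p : Sym2 V → Prop) [DecidablePred p] (A : Multiset (Sym2 V)) :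
    numComponents (A.filter p) ≤ numComponents A + countP (fun e => ¬ p e) A := by
  have := numComponents_sub_le A (A.filter fun e => ¬ p e)
  rwa [← countP_eq_card_filter, tsub_eq_of_eq_add (filter_add_not p A).symm] at this

theorem numComponents_zero : numComponents (0 : Multiset (Sym2 V)) = Fintype.card V := by
  rw [← Nat.card_eq_fintype_card]
  exact Nat.card_congr ⟨Quot.lift id fun _ _ h => absurd h (notMem_zero _), Quot.mk _,
    Quot.ind fun _ => rfl, fun _ => rfl⟩

theorem numComponents_pos [Nonempty V] (A : Multiset (Sym2 V)) : 0 < numComponents A :=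
  have : Nonempty (Quot (Adj A)) := .map (Quot.mk _) ‹_›
  Nat.card_pos

theorem card_le_card_add_numComponents (A : Multiset (Sym2 V)) :
    Fintype.card V ≤ card A + numComponents A := by
  have := numComponents_sub_le A A
  rw [tsub_self, numComponents_zero] at this
  omega

-- Edge count plus component count is `|V|` exactly for acyclic multigraphs.
def IsForest (T : Multiset (Sym2 V)) : Prop :=
  card T + numComponents T = Fintype.card V

theorem exists_isForest_le (A : Multiset (Sym2 V)) :
    ∃ T ≤ A, IsForest T ∧ numComponents T = numComponents A := by
  induction A using Multiset.induction with
  | empty => exact ⟨0, le_rfl, by simp [IsForest, numComponents_zero], rfl⟩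
  | cons e A ih =>
    obtain ⟨T, hTA, hT, hnc⟩ := ih
    induction e using Sym2.ind with
    | _ a b =>
      by_cases h : Reachable A a b
      · exact ⟨T, hTA.trans (le_cons_self _ _), hT, by rw [numComponents_cons_of_reachable h, hnc]⟩
      · have hT' : ¬ Reachable T a b := fun h' => h (h'.mono hTA)
        have h1 := numComponents_cons_add_one hT'
        have h2 := numComponents_cons_add_one h
        refine ⟨s(a, b) ::ₘ T, cons_le_cons _ hTA, ?_, by omega⟩
        unfold IsForest at hT ⊢
        rw [card_cons]
        omega

theorem IsForest.isSpanningTree (hT : IsForest T) (h : numComponents T = 1) :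
    IsSpanningTree T :=
  ⟨h, by unfold IsForest at hT; omega⟩

end Counting

section Cuts

open scoped Classical

variable {V : Type*} [Fintype V] [DecidableEq V] {A E T X : Multiset (Sym2 V)} {k : ℕ}

theorem numComponents_le_countP_add_one (hT : numComponents T = 1) (B : Multiset (Sym2 V)) :
    numComponents B ≤ countP (· ∉ internalEdges B) T + 1 :=
  calc numComponents B ≤ numComponents (T.filter (· ∈ internalEdges B)) :=
        numComponents_le_of_forall_mem fun _ _ h => (mem_filter.1 h).2
    _ ≤ countP (· ∉ internalEdges B) T + 1 := by
        have := numComponents_filter_le (· ∈ internalEdges B) T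
        omega

theorem _root_.HasEdgeDisjointSpanningTrees.mul_le_countP (h : HasEdgeDisjointSpanningTrees A k)
    (B : Multiset (Sym2 V)) :
    k * (numComponents B - 1) ≤ countP (· ∉ internalEdges B) A := by
  obtain ⟨T, hTA, hT⟩ := h
  calc k * (numComponents B - 1) = ∑ _i : Fin k, (numComponents B - 1) := by simp
    _ ≤ ∑ i, countP (· ∉ internalEdges B) (T i) := Finset.sum_le_sum fun i _ => by
        have := numComponents_le_countP_add_one (hT i).1 B
        omega
    _ = countP (· ∉ internalEdges B) (∑ i, T i) := (map_sum (countPAddMonoidHom _) _ _).symm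
    _ ≤ countP (· ∉ internalEdges B) A := countP_le_of_le _ hTA

theorem mul_lt_card_of_forall_erase (hconn : numComponents E = 1)
    (h : ∀ e ∈ E, HasEdgeDisjointSpanningTrees (E.erase e) k) (hXE : X ≤ E)
    (hX : 1 < numComponents (E - X)) :
    k * (numComponents (E - X) - 1) < card X := by
  have hcross : countP (· ∉ internalEdges (E - X)) E ≤ card X := by
    have := countP_add (· ∉ internalEdges (E - X)) (E - X) X
    rw [tsub_add_cancel_of_le hXE,
      countP_eq_zero.2 fun e he => not_not.2 (mem_internalEdges_of_mem he), zero_add] at this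
    exact this ▸ countP_le_card _ _
  obtain ⟨e, he, hecross⟩ : ∃ e ∈ E, e ∉ internalEdges (E - X) := by
    by_contra! hall
    have := numComponents_le_of_forall_mem fun a b hab => hall s(a, b) hab
    omega
  have herase := countP_cons_of_pos (p := (· ∉ internalEdges (E - X))) (E.erase e) hecross
  rw [cons_erase he] at herase
  have := (h e he).mul_le_countP (E - X)
  omega

end Cuts

theorem lt_strength_iff {V : Type*} [Fintype V] [DecidableEq V] (hV : 1 < Fintype.card V)
    (E : Multiset (Sym2 V)) (r : ℝ) :
    r < strength E ↔ ∀ X ≤ E, 1 < numComponents (E - X) →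
      r < card X / ((numComponents (E - X) : ℝ) - 1) := by
  set S := {r : ℝ | ∃ X ≤ E, 1 < numComponents (E - X) ∧
    r = (card X : ℝ) / ((numComponents (E - X) : ℝ) - 1)}
  have hfin : S.Finite :=
    ((Set.finite_Iic E).image fun X => (card X : ℝ) / ((numComponents (E - X) : ℝ) - 1)).subset
      (by rintro _ ⟨X, hX, -, rfl⟩; exact ⟨X, hX, rfl⟩)
  have hne : S.Nonempty := ⟨_, E, le_rfl, by rwa [tsub_self, numComponents_zero], rfl⟩
  change r < sInf S ↔ _
  constructor
  · exact fun h X hX hc => h.trans_le (csInf_le hfin.bddBelow ⟨X, hX, hc, rfl⟩)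
  · intro h
    obtain ⟨X, hX, hc, heq⟩ := hne.csInf_mem hfin
    exact heq ▸ h X hX hc

section Packing

variable {V : Type*} [Fintype V] [DecidableEq V] {k : ℕ} {E : Multiset (Sym2 V)}
  {F F' F0 : Fin k → Multiset (Sym2 V)} {x y : V}

noncomputable def totalComponents (F : Fin k → Multiset (Sym2 V)) : ℕ := ∑ i, numComponents (F i)

def IsMinPacking (E : Multiset (Sym2 V)) (F : Fin k → Multiset (Sym2 V)) : Prop :=
  ∑ i, F i ≤ E ∧
    ∀ F' : Fin k → Multiset (Sym2 V), ∑ i, F' i ≤ E → totalComponents F ≤ totalComponents F'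

theorem exists_isMinPacking (E : Multiset (Sym2 V)) (k : ℕ) :
    ∃ F : Fin k → Multiset (Sym2 V), IsMinPacking E F := by
  obtain ⟨F, hF, hmin⟩ := (measure (totalComponents (V := V) (k := k))).wf.has_min
    {F | ∑ i, F i ≤ E} ⟨0, by simp⟩
  exact ⟨F, hF, fun F' hF' => not_lt.1 (hmin F' hF')⟩

theorem totalComponents_update (F : Fin k → Multiset (Sym2 V)) (j : Fin k)
    (M : Multiset (Sym2 V)) :
    totalComponents (update F j M) + numComponents (F j) = numComponents M + totalComponents F := by
  obtain ⟨R, hsum, hupd⟩ := Finset.exists_sum_update (fun i => numComponents (F i)) j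
  have : totalComponents (update F j M) = numComponents M + R := by
    rw [totalComponents, ← hupd]
    refine Finset.sum_congr rfl fun i _ => ?_
    rcases eq_or_ne i j with rfl | hij <;> simp [*]
  rw [this, totalComponents, hsum]
  ring

theorem IsMinPacking.reachable_of_mem_sub (hF : IsMinPacking E F)
    (hxy : s(x, y) ∈ E - ∑ i, F i) (j : Fin k) : Reachable (F j) x y := by
  by_contra h
  have := hF.2 _ ((sum_update_le_cons F j le_rfl).trans ((mem_sub_iff_cons_le hF.1).1 hxy))
  have := totalComponents_update F j (s(x, y) ::ₘ F j)
  have := numComponents_cons_add_one h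
  omega

def ExchangeStep (E : Multiset (Sym2 V)) (F F' : Fin k → Multiset (Sym2 V)) : Prop :=
  ∃ j, ∃ g ∈ E - ∑ i, F i, ∃ f, numComponents ((g ::ₘ F j).erase f) = numComponents (F j) ∧
    F' = update F j ((g ::ₘ F j).erase f)

theorem IsMinPacking.exchangeStep (hF : IsMinPacking E F) (h : ExchangeStep E F F') :
    IsMinPacking E F' := by
  obtain ⟨j, g, hg, f, hnc, rfl⟩ := h
  refine ⟨(sum_update_le_cons F j (erase_le f _)).trans ((mem_sub_iff_cons_le hF.1).1 hg),
    fun F' hF' => ?_⟩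
  have := hF.2 F' hF'
  have := totalComponents_update F j ((g ::ₘ F j).erase f)
  omega

theorem IsMinPacking.reflTransGen (hF : IsMinPacking E F)
    (h : ReflTransGen (ExchangeStep E) F F') : IsMinPacking E F' := by
  induction h with
  | refl => exact hF
  | tail _ hstep ih => exact ih.exchangeStep hstep

def exchangeableEdges (E : Multiset (Sym2 V)) (F0 : Fin k → Multiset (Sym2 V)) : Set (Sym2 V) :=
  {g | ∃ F, ReflTransGen (ExchangeStep E) F0 F ∧ g ∈ E - ∑ i, F i}

theorem numComponents_cons_erase_of_minimal {A B : Multiset (Sym2 V)} {f : Sym2 V}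
    (hBA : B ≤ A) (hA : Reachable A x y) (hB : Reachable B x y)
    (hmin : ∀ f ∈ B, ¬ Reachable (B.erase f) x y) (hf : f ∈ B) :
    numComponents ((s(x, y) ::ₘ A).erase f) = numComponents A := by
  induction f using Sym2.ind with
  | _ p q =>
    have hfA := mem_of_le hBA hf
    have hpq : Reachable (s(x, y) ::ₘ B.erase s(p, q)) p q := by
      rw [← cons_erase hf, reachable_cons_iff] at hB
      have hxy : Reachable (s(x, y) ::ₘ B.erase s(p, q)) x y := reachable_of_mem (mem_cons_self _ _)
      have hC := le_cons_self (B.erase s(p, q)) s(x, y)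
      rcases hB with h | ⟨h1, h2⟩ | ⟨h1, h2⟩
      · exact absurd h (hmin _ hf)
      · exact ((h1.mono hC).symm.trans hxy).trans (h2.mono hC).symm
      · exact (h2.mono hC).trans (hxy.symm.trans (h1.mono hC))
    have hpq' := hpq.mono (cons_le_cons _ (erase_le_erase _ hBA))
    rw [erase_cons_tail_of_mem hfA, ← numComponents_cons_of_reachable hpq', cons_swap,
      cons_erase hfA, numComponents_cons_of_reachable hA]

section Exchange

open scoped Classical

theorem reachable_filter_of_mem_sub (hF0 : IsMinPacking E F0)
    (hR : ReflTransGen (ExchangeStep E) F0 F)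
    (hchain : ∀ i a b, Reachable ((F i).filter (· ∈ exchangeableEdges E F0)) a b →
      Reachable ((F0 i).filter (· ∈ exchangeableEdges E F0)) a b)
    (hxy : s(x, y) ∈ E - ∑ i, F i) (i : Fin k) :
    Reachable ((F0 i).filter (· ∈ exchangeableEdges E F0)) x y := by
  have hF := hF0.reflTransGen hR
  have hA := hF.reachable_of_mem_sub hxy i
  obtain ⟨B, hBF, hB, hmin⟩ := exists_minimal_reachable hA
  -- Each edge `f` of a minimal `x`–`y` connection in `F i` can be swapped for `s(x, y)`.
  refine hchain i x y (hB.mono (le_filter.2 ⟨hBF, fun f hf => ?_⟩))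
  refine ⟨_, hR.tail ⟨i, _, hxy, f, numComponents_cons_erase_of_minimal hBF hA hB hmin hf, rfl⟩, ?_⟩
  obtain ⟨R, hsum, hupd⟩ := Finset.exists_sum_update F i
  have hcons : s(x, y) ::ₘ F i + R ≤ E := by
    rw [cons_add, ← hsum]
    exact (mem_sub_iff_cons_le hF.1).1 hxy
  rw [hupd, mem_sub_iff_cons_le ((add_le_add (erase_le f _) le_rfl).trans hcons), ← cons_add,
    cons_erase (mem_cons_of_mem (mem_of_le hBF hf))]
  exact hcons

theorem reachable_filter_of_reflTransGen (hF0 : IsMinPacking E F0)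
    (hR : ReflTransGen (ExchangeStep E) F0 F) :
    ∀ i a b, Reachable ((F i).filter (· ∈ exchangeableEdges E F0)) a b →
      Reachable ((F0 i).filter (· ∈ exchangeableEdges E F0)) a b := by
  induction hR with
  | refl => exact fun _ _ _ h => h
  | @tail G _ hR hstep ih =>
    obtain ⟨j, g, hg, f, -, rfl⟩ := hstep
    intro i a b hab
    rcases eq_or_ne i j with rfl | hij
    · rw [update_self] at hab
      have hle : ((g ::ₘ G i).erase f).filter (· ∈ exchangeableEdges E F0) ≤
          g ::ₘ (G i).filter (· ∈ exchangeableEdges E F0) := by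
        refine (filter_le_filter _ (erase_le f _)).trans ?_
        rw [filter_cons]
        split_ifs <;> simp [le_cons_self]
      induction g using Sym2.ind with
      | _ u v =>
        have huv := reachable_filter_of_mem_sub hF0 hR ih hg i
        rcases reachable_cons_iff.1 (hab.mono hle) with h | ⟨h1, h2⟩ | ⟨h1, h2⟩
        · exact ih i a b h
        · exact ((ih i a u h1).trans huv).trans (ih i v b h2)
        · exact ((ih i a v h1).trans huv.symm).trans (ih i u b h2)
    · rw [update_of_ne hij] at hab
      exact ih i a b hab

theorem reachable_filter_of_mem_exchangeableEdges (hF0 : IsMinPacking E F0)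
    (he : s(x, y) ∈ exchangeableEdges E F0) (i : Fin k) :
    Reachable ((F0 i).filter (· ∈ exchangeableEdges E F0)) x y :=
  let ⟨_, hR, hxy⟩ := he
  reachable_filter_of_mem_sub hF0 hR (reachable_filter_of_reflTransGen hF0 hR) hxy i

end Exchange

theorem totalComponents_le_of_cut [Nonempty V]
    (hcut : ∀ X ≤ E, k * (numComponents (E - X) - 1) ≤ card X)
    (hFE : ∑ i, F i ≤ E) (hF : ∀ i, IsForest (F i)) (N : Set (Sym2 V)) [DecidablePred (· ∈ N)]
    (hleft : ∀ e ∈ E - ∑ i, F i, e ∈ N)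
    (hN : ∀ i, numComponents ((F i).filter (· ∈ N)) ≤ numComponents (E.filter (· ∈ N))) :
    totalComponents F ≤ k := by
  have hX := hcut (E.filter (· ∉ N)) (filter_le _ _)
  rw [tsub_eq_of_eq_add (filter_add_not (· ∈ N) E).symm, ← countP_eq_card_filter] at hX
  set c := numComponents (E.filter (· ∈ N))
  have hpart : ∀ i, countP (· ∉ N) (F i) + numComponents (F i) ≤ c := fun i => by
    have h1 := card_le_card_add_numComponents ((F i).filter (· ∈ N))
    have h2 := card_eq_countP_add_countP (· ∈ N) (F i)
    have h3 := hF i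
    have h4 := hN i
    rw [← countP_eq_card_filter] at h1
    unfold IsForest at h3
    omega
  have hcross : countP (· ∉ N) E = ∑ i, countP (· ∉ N) (F i) := by
    have := countP_add (· ∉ N) (E - ∑ i, F i) (∑ i, F i)
    rw [tsub_add_cancel_of_le hFE, countP_eq_zero.2 fun e he => not_not.2 (hleft e he),
      zero_add] at this
    exact this.trans (map_sum (countPAddMonoidHom _) _ _)
  have hsum := Finset.sum_le_sum fun i (_ : i ∈ Finset.univ) => hpart i
  rw [Finset.sum_add_distrib, ← hcross, Finset.sum_const, Finset.card_univ, Fintype.card_fin,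
    smul_eq_mul] at hsum
  have : k * (c - 1) + k = k * c := by
    rw [Nat.mul_sub_one, Nat.sub_add_cancel (Nat.le_mul_of_pos_right k (numComponents_pos _))]
  unfold totalComponents
  omega

theorem hasEdgeDisjointSpanningTrees_of_cut [Nonempty V]
    (hcut : ∀ X ≤ E, k * (numComponents (E - X) - 1) ≤ card X) :
    HasEdgeDisjointSpanningTrees E k := by
  classical
  obtain ⟨F1, hF1⟩ := exists_isMinPacking E k
  choose F hle hforest hnc using fun i => exists_isForest_le (F1 i)
  have hF : IsMinPacking E F := by
    have : totalComponents F = totalComponents F1 := Finset.sum_congr rfl fun i _ => hnc i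
    exact ⟨(Finset.sum_le_sum fun i _ => hle i).trans hF1.1, this ▸ hF1.2⟩
  have htotal : totalComponents F ≤ k :=
    totalComponents_le_of_cut hcut hF.1 hforest (exchangeableEdges E F) (fun e he => ⟨F, .refl, he⟩)
      fun i => numComponents_le_of_forall_mem fun _ _ hab =>
        reachable_filter_of_mem_exchangeableEdges hF (mem_filter.1 hab).2 i
  refine ⟨F, hF.1, fun i => (hforest i).isSpanningTree ?_⟩
  by_contra hi
  have : ∑ _j : Fin k, 1 < totalComponents F :=
    Finset.sum_lt_sum (fun j _ => numComponents_pos (F j))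
      ⟨i, Finset.mem_univ _, by have := numComponents_pos (F i); omega⟩
  simp only [Finset.sum_const, Finset.card_univ, Fintype.card_fin, smul_eq_mul, mul_one] at this
  omega

end Packing

theorem forall_erase_hasEdgeDisjointSpanningTrees_iff {V : Type*} [Fintype V] [DecidableEq V]
    [Nonempty V] {E : Multiset (Sym2 V)} {k : ℕ} (hconn : numComponents E = 1) :
    (∀ e ∈ E, HasEdgeDisjointSpanningTrees (E.erase e) k) ↔
      ∀ X ≤ E, 1 < numComponents (E - X) → k * (numComponents (E - X) - 1) < card X := by
  refine ⟨fun h X hXE hX => mul_lt_card_of_forall_erase hconn h hXE hX, fun h e he => ?_⟩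
  refine hasEdgeDisjointSpanningTrees_of_cut fun X hX => ?_
  by_cases hc : 1 < numComponents (E.erase e - X)
  · have := h (e ::ₘ X) ((cons_le_cons e hX).trans_eq (cons_erase he)) (by rwa [sub_cons])
    rw [sub_cons, card_cons] at this
    omega
  · simp [Nat.sub_eq_zero_of_le (not_lt.1 hc)]

end EdgeMultiset

theorem stmt_5_general {V : Type*} [Fintype V] [DecidableEq V] (E : Multiset (Sym2 V))
    (hV : 1 < Fintype.card V)
    (hconn : numComponents E = 1) (k : ℕ) :
    (∀ e ∈ E, HasEdgeDisjointSpanningTrees (E.erase e) k) ↔ (k : ℝ) < strength E := by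
  have : Nonempty V := Fintype.card_pos_iff.1 (by omega)
  rw [EdgeMultiset.forall_erase_hasEdgeDisjointSpanningTrees_iff hconn,
    EdgeMultiset.lt_strength_iff hV]
  refine forall₂_congr fun X _ => imp_congr_right fun hX => ?_
  have hc : (1 : ℝ) < numComponents (E - X) := by exact_mod_cast hX
  rw [lt_div_iff₀ (by linarith), ← Nat.cast_pred (by omega), ← Nat.cast_mul, Nat.cast_lt]

theorem stmt_5 {V : Type*} [Fintype V] [DecidableEq V] (E : Multiset (Sym2 V))
    (hloop : ∀ e ∈ E, ¬ e.IsDiag) (hV : 1 < Fintype.card V)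
    (hconn : numComponents E = 1) (k : ℕ) (hk : 0 < k) :
    (∀ e ∈ E, HasEdgeDisjointSpanningTrees (E.erase e) k) ↔ (k : ℝ) < strength E :=
  stmt_5_general E hV hconn k
end

section
/- Let a, b, n be positive reals with a + b ≥ n - 3, a ≥ 4 and b ≥ 4, and suppose 6ab/n ≤ 2√5·√(ab·(1 - a/n)·(1 - b/n)). Then n ≤ 112. -/
/-! Squaring the hypothesis turns it into `9ab ≤ 5(n - a)(n - b)`. Since `a + b ≥ n - 3`,
`(n - a)(n - b) ≤ ab + 3n`, hence `4ab ≤ 15n`; on the other hand `(a - 4)(b - 4) ≥ 0` gives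
`ab ≥ 4(a + b - 4) ≥ 4(n - 7)`, so `16(n - 7) ≤ 15n`. -/

lemma sq_mul_le_of_div_le_mul_sqrt {d l a b n : ℝ} (hd : 0 < d) (ha : 0 < a) (hb : 0 < b)
    (hn : 0 < n) (h : d * a * b / n ≤ l * √(a * b * (1 - a / n) * (1 - b / n))) :
    d ^ 2 * (a * b) ≤ l ^ 2 * ((n - a) * (n - b)) := by
  have hX : a * b * (1 - a / n) * (1 - b / n) = a * b * ((n - a) * (n - b)) / n ^ 2 := by
    field_simp
  have hlhs : 0 < d * a * b / n := by positivity
  have hX_pos : 0 < a * b * (1 - a / n) * (1 - b / n) := by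
    by_contra! hneg
    rw [Real.sqrt_eq_zero_of_nonpos hneg, mul_zero] at h
    linarith
  have hsq : (d * a * b / n) ^ 2 ≤ l ^ 2 * (a * b * (1 - a / n) * (1 - b / n)) := by
    calc (d * a * b / n) ^ 2 ≤ (l * √(a * b * (1 - a / n) * (1 - b / n))) ^ 2 :=
          pow_le_pow_left₀ hlhs.le h 2
      _ = _ := by rw [mul_pow, Real.sq_sqrt hX_pos.le]
  rw [hX, div_pow, mul_div_assoc', div_le_div_iff_of_pos_right (by positivity)] at hsq
  have hab : 0 < a * b := by positivity
  nlinarith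

lemma sub_mul_sub_le_of_sub_le_add {a b c n : ℝ} (hn : 0 ≤ n) (h : n - c ≤ a + b) :
    (n - a) * (n - b) ≤ a * b + c * n := by
  nlinarith

lemma four_mul_sub_le_mul {a b : ℝ} (ha : 4 ≤ a) (hb : 4 ≤ b) : 4 * (a + b - 4) ≤ a * b := by
  nlinarith [mul_nonneg (sub_nonneg.2 ha) (sub_nonneg.2 hb)]

theorem stmt_11 (a b n : ℝ) (ha0 : 0 < a) (hb0 : 0 < b) (hn0 : 0 < n)
    (hab : n - 3 ≤ a + b) (ha : 4 ≤ a) (hb : 4 ≤ b)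
    (h : 6 * a * b / n ≤ 2 * Real.sqrt 5 * Real.sqrt (a * b * (1 - a / n) * (1 - b / n))) :
    n ≤ 112 := by
  have hmix := sq_mul_le_of_div_le_mul_sqrt (by norm_num) ha0 hb0 hn0 h
  have hl : (2 * √5 : ℝ) ^ 2 = 20 := by
    rw [mul_pow, Real.sq_sqrt (by norm_num)]
    norm_num
  rw [hl] at hmix
  have hcut := sub_mul_sub_le_of_sub_le_add hn0.le hab
  have hprod := four_mul_sub_le_mul ha hb
  linarith
end

section
/- If G is a k-regular graph with n vertices and diameter m, then n ≤ 1 + k·∑_{i=0}^{m-1} (k-1)^i. -/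
/-!
Fix a vertex `v` and sort the vertices into spheres `S i` by their distance from `v`; by the
diameter bound only the spheres `S 0, …, S m` are nonempty. `S 0 = {v}` and `|S 1| ≤ k`. For
`i ≥ 1` every vertex of `S (i + 1)` has a neighbour in `S i`, while every vertex of `S i` has a
neighbour in `S (i - 1)` and hence at most `k - 1` neighbours in `S (i + 1)`. Double counting gives
`|S (i + 1)| ≤ (k - 1) |S i|`, so `|S (i + 1)| ≤ k (k - 1) ^ i`, and summing over the spheres
gives the bound.
-/

open Finset

namespace SimpleGraph

variable {V : Type*} {G : SimpleGraph V}

lemma exists_adj_dist_eq_of_dist_eq_succ {u v : V} {n : ℕ} (h : G.dist u v = n + 1) :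
    ∃ w, G.Adj w v ∧ G.dist u w = n := by
  obtain ⟨p, hp⟩ := exists_walk_of_dist_ne_zero (ne_of_eq_of_ne h n.succ_ne_zero)
  have hlen : p.length = n + 1 := hp.trans h
  have hadj : G.Adj (p.getVert n) v := by
    simpa [← hlen, p.getVert_length] using p.adj_getVert_succ (i := n) (by omega)
  have hle : G.dist u (p.getVert n) ≤ n :=
    (dist_le (p.take n)).trans (by simp [Walk.take_length])
  refine ⟨p.getVert n, hadj, ?_⟩
  rcases hadj.diff_dist_adj (u := u) with h' | h' | h' <;> omega

section Sphere

variable [Fintype V] (G)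

noncomputable def distSphere (v : V) (i : ℕ) : Finset V := {u | G.dist v u = i}

variable {G}

@[simp]
lemma mem_distSphere {v u : V} {i : ℕ} : u ∈ G.distSphere v i ↔ G.dist v u = i := by
  simp [distSphere]

lemma Connected.distSphere_zero (hG : G.Connected) (v : V) : G.distSphere v 0 = {v} := by
  ext u
  simp [hG.dist_eq_zero_iff, eq_comm]

lemma card_eq_sum_card_distSphere {v : V} {m : ℕ} (hv : ∀ u, G.dist v u ≤ m) :
    Fintype.card V = ∑ i ∈ range (m + 1), #(G.distSphere v i) :=
  card_eq_sum_card_fiberwise fun u _ ↦ mem_range.2 (Nat.lt_succ_of_le (hv u))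

variable [DecidableRel G.Adj] {k : ℕ}

lemma distSphere_one (v : V) : G.distSphere v 1 = G.neighborFinset v := by
  ext u
  simp

lemma card_distSphere_succ_succ_le (hdeg : ∀ w, G.degree w ≤ k) (v : V) (i : ℕ) :
    #(G.distSphere v (i + 2)) ≤ (k - 1) * #(G.distSphere v (i + 1)) := by
  classical
  have hbelow : ∀ u ∈ G.distSphere v (i + 2),
      1 ≤ #((G.distSphere v (i + 1)).bipartiteAbove G.Adj u) := by
    intro u hu
    obtain ⟨w, hwu, hw⟩ := exists_adj_dist_eq_of_dist_eq_succ (mem_distSphere.1 hu)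
    exact one_le_card.2 ⟨w, (mem_bipartiteAbove _).2 ⟨mem_distSphere.2 hw, hwu.symm⟩⟩
  have habove : ∀ w ∈ G.distSphere v (i + 1),
      #((G.distSphere v (i + 2)).bipartiteBelow G.Adj w) ≤ k - 1 := by
    intro w hw
    obtain ⟨b, hbw, hb⟩ := exists_adj_dist_eq_of_dist_eq_succ (mem_distSphere.1 hw)
    have hsub :
        (G.distSphere v (i + 2)).bipartiteBelow G.Adj w ⊆ (G.neighborFinset w).erase b := by
      intro u hu
      rw [mem_bipartiteBelow, mem_distSphere] at hu
      refine mem_erase.2 ⟨?_, (mem_neighborFinset _ _ _).2 hu.2.symm⟩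
      rintro rfl
      omega
    calc _ ≤ #((G.neighborFinset w).erase b) := card_le_card hsub
      _ = G.degree w - 1 := by rw [card_erase_of_mem ((mem_neighborFinset _ _ _).2 hbw.symm),
          card_neighborFinset_eq_degree]
      _ ≤ k - 1 := Nat.sub_le_sub_right (hdeg w) 1
  simpa [mul_comm] using card_mul_le_card_mul G.Adj hbelow habove

lemma card_distSphere_succ_le (hdeg : ∀ w, G.degree w ≤ k) (v : V) (i : ℕ) :
    #(G.distSphere v (i + 1)) ≤ k * (k - 1) ^ i := by
  induction i with
  | zero => simpa [distSphere_one] using hdeg v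
  | succ i ih =>
    calc #(G.distSphere v (i + 2)) ≤ (k - 1) * #(G.distSphere v (i + 1)) :=
          card_distSphere_succ_succ_le hdeg v i
      _ ≤ (k - 1) * (k * (k - 1) ^ i) := Nat.mul_le_mul_left _ ih
      _ = k * (k - 1) ^ (i + 1) := by ring

end Sphere

end SimpleGraph

open SimpleGraph in
theorem stmt_13 {V : Type*} [Fintype V] (G : SimpleGraph V) [DecidableRel G.Adj]
    (k m : ℕ) (hreg : G.IsRegularOfDegree k) (hconn : G.Connected)
    (hdiam : ∀ u v : V, G.dist u v ≤ m) :
    Fintype.card V ≤ 1 + k * ∑ i ∈ Finset.range m, (k - 1) ^ i := by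
  obtain ⟨v⟩ := hconn.nonempty
  calc Fintype.card V = ∑ i ∈ range (m + 1), #(G.distSphere v i) :=
        card_eq_sum_card_distSphere (hdiam v)
    _ = ∑ i ∈ range m, #(G.distSphere v (i + 1)) + #(G.distSphere v 0) := sum_range_succ' _ m
    _ ≤ ∑ i ∈ range m, k * (k - 1) ^ i + 1 := by
        gcongr with i
        · exact card_distSphere_succ_le (fun w ↦ (hreg w).le) v i
        · simp [hconn.distSphere_zero v]
    _ = 1 + k * ∑ i ∈ range m, (k - 1) ^ i := by rw [mul_sum, add_comm]
end
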